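/- arXiv:1807.04705 — 2 statements merged into one kernel-verified Lean document; each statement's English description precedes it below -/
import Mathlib

section
/- Let y ∈ ℝ^d be a vector with nonnegative entries and ‖y‖₂ = 1, and let 1 ≤ m ≤ d. Then the maximum of ⟨y, z⟩ over vectors z ∈ ℝ^d with nonnegative entries, ‖z‖₂ = 1, and ‖z‖_∞ ≤ 1/√m equals (1/√m)‖y‖_{[m]}, i.e., it agrees with the maximum taken without the nonnegativity restriction on z. -/
open Matrix BigOperators Complex ComplexOrder

noncomputable section

variable {ι : Type*} [Fintype ι] [DecidableEq ι]

/-- The matrix square root of a PSD matrix, as defined in Mathlib (Dec 2024). -/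
def Matrix.PosSemidef.sqrt {A : Matrix ι ι ℂ} (hA : A.PosSemidef) : Matrix ι ι ℂ :=
  hA.1.eigenvectorUnitary.1 * diagonal ((↑) ∘ (√·) ∘ hA.1.eigenvalues) *
    (star hA.1.eigenvectorUnitary : Matrix ι ι ℂ)

/-- A density matrix: positive semidefinite with unit trace. -/
def IsDensityMatrix (ρ : Matrix ι ι ℂ) : Prop := ρ.PosSemidef ∧ ρ.trace = 1

/-- The rank-one projector |ψ⟩⟨ψ| associated to a vector. -/
def pureState (ψ : ι → ℂ) : Matrix ι ι ℂ := Matrix.of fun i j => ψ i * (starRingEnd ℂ) (ψ j)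

/-- The trace norm ‖A‖₁ = Tr √(AᴴA). -/
def traceNorm (A : Matrix ι ι ℂ) : ℝ :=
  ((Matrix.posSemidef_conjTranspose_mul_self A).sqrt.trace).re

open Classical in
/-- Matrix square root (junk value 0 on matrices that are not PSD). -/
def matSqrt (A : Matrix ι ι ℂ) : Matrix ι ι ℂ := if h : A.PosSemidef then h.sqrt else 0

/-- Fidelity F(ρ,σ) = ‖√ρ√σ‖₁². -/
def fidelity (ρ σ : Matrix ι ι ℂ) : ℝ := (traceNorm (matSqrt ρ * matSqrt σ))^2

/-- The dephasing map Δ, keeping only the diagonal. -/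
def deph (ρ : Matrix ι ι ℂ) : Matrix ι ι ℂ := Matrix.diagonal (fun i => ρ i i)

/-- The m-distillation norm ‖ψ‖_{[m]} = min_x (‖ψ-x‖₁ + √m ‖x‖₂). -/
def distNorm (m : ℕ) (ψ : ι → ℂ) : ℝ :=
  ⨅ x : ι → ℂ, ((∑ i, ‖ψ i - x i‖) +
    Real.sqrt m * Real.sqrt (∑ i, (‖x i‖)^2))

/-- M_m: convex combinations of pure states with ℓ∞ norm at most 1/√m. -/
def Mset (m : ℕ) : Set (Matrix ι ι ℂ) :=
  {ω | ∃ (n : ℕ) (p : Fin n → ℝ) (ψ : Fin n → ι → ℂ),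
    (∀ i, 0 ≤ p i) ∧ (∑ i, p i = 1) ∧
    (∀ i, ∑ j, (‖ψ i j‖)^2 = 1) ∧
    (∀ i j, ‖ψ i j‖ ≤ 1 / Real.sqrt m) ∧
    ω = ∑ i, p i • pureState (ψ i)}

/-- N_m: density matrices with all diagonal entries at most 1/m. -/
def Nset (m : ℕ) : Set (Matrix ι ι ℂ) :=
  {ω | IsDensityMatrix ω ∧ ∀ i, (ω i i).re ≤ 1 / m}

/-- Optimal fidelity of assisted distillation F_A(ρ,m) = max_{ω ∈ M_m} F(ρ,ω). -/
def FA (ρ : Matrix ι ι ℂ) (m : ℕ) : ℝ :=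
  sSup {r : ℝ | ∃ ω ∈ Mset (ι := ι) m, r = fidelity ρ ω}


/-! Weak duality: for every `x` and every `z` with `‖z‖_∞ ≤ 1/√m` and `‖z‖₂ ≤ 1`,
`√m ⟨Re ψ, z⟩ ≤ ‖ψ - x‖₁ + √m ‖x‖₂`. For `y ≥ 0` this bound is attained by a nonnegative `z`.
If `y` has at most `m` positive entries, take `x = 0` and `z` the normalised indicator of an
`m`-set containing the support of `y`. Otherwise take `x = min(y, t)` and `z ∝ min(y, t)`, where the
water level `t > 0` solves `∑ min(yᵢ, t)² = m t²`. -/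

section DistillationDuality

variable {κ : Type*} [Fintype κ]

open Finset

def distObjective (m : ℕ) (ψ x : κ → ℂ) : ℝ :=
  (∑ i, ‖ψ i - x i‖) + √(m : ℝ) * √(∑ i, ‖x i‖ ^ 2)

theorem distObjective_nonneg (m : ℕ) (ψ x : κ → ℂ) : 0 ≤ distObjective m ψ x := by
  unfold distObjective; positivity

theorem distNorm_le_distObjective (m : ℕ) (ψ x : κ → ℂ) : distNorm m ψ ≤ distObjective m ψ x :=
  ciInf_le ⟨0, by rintro _ ⟨x, rfl⟩; exact distObjective_nonneg m ψ x⟩ x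

theorem distObjective_ofReal (m : ℕ) (y x : κ → ℝ) :
    distObjective m (fun i => (y i : ℂ)) (fun i => (x i : ℂ)) =
      (∑ i, |y i - x i|) + √m * √(∑ i, x i ^ 2) := by
  simp only [distObjective, ← Complex.ofReal_sub, Complex.norm_real, Real.norm_eq_abs, sq_abs]

/-- Weak duality: split `ψ = (ψ - x) + x`, pair the first part with `‖z‖_∞ ≤ 1/√m` and the second
with `‖z‖₂ ≤ 1` (Cauchy–Schwarz). -/
theorem sqrt_mul_sum_re_mul_le_distObjective {m : ℕ} (hm : 0 < m) {z : κ → ℝ}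
    (hz : ∀ i, |z i| ≤ 1 / √m) (hz2 : ∑ i, z i ^ 2 ≤ 1) (ψ x : κ → ℂ) :
    √m * ∑ i, (ψ i).re * z i ≤ distObjective m ψ x := by
  have hs : 0 < √(m : ℝ) := by positivity
  have hdiff : ∑ i, (ψ i - x i).re * z i ≤ (∑ i, ‖ψ i - x i‖) * (1 / √m) := by
    rw [sum_mul]
    refine sum_le_sum fun i _ => ?_
    calc (ψ i - x i).re * z i ≤ |(ψ i - x i).re| * |z i| := by
          rw [← abs_mul]; exact le_abs_self _
      _ ≤ ‖ψ i - x i‖ * (1 / √m) :=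
          mul_le_mul (Complex.abs_re_le_norm _) (hz i) (abs_nonneg _) (norm_nonneg _)
  have hx : ∑ i, (x i).re * z i ≤ √(∑ i, ‖x i‖ ^ 2) :=
    calc ∑ i, (x i).re * z i ≤ ∑ i, ‖x i‖ * |z i| :=
          sum_le_sum fun i _ => (le_abs_self _).trans
            (by rw [abs_mul]; gcongr; exact Complex.abs_re_le_norm _)
      _ ≤ √(∑ i, ‖x i‖ ^ 2) * √(∑ i, |z i| ^ 2) := Real.sum_mul_le_sqrt_mul_sqrt _ _ _
      _ ≤ √(∑ i, ‖x i‖ ^ 2) := by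
          simp only [sq_abs]
          exact mul_le_of_le_one_right (Real.sqrt_nonneg _) (Real.sqrt_le_one.2 hz2)
  calc √m * ∑ i, (ψ i).re * z i
      = √m * (∑ i, (ψ i - x i).re * z i + ∑ i, (x i).re * z i) := by
        simp only [Complex.sub_re, sub_mul, sum_sub_distrib, sub_add_cancel]
    _ ≤ √m * ((∑ i, ‖ψ i - x i‖) * (1 / √m) + √(∑ i, ‖x i‖ ^ 2)) := by gcongr
    _ = distObjective m ψ x := by
        rw [distObjective]; field_simp

theorem sqrt_mul_sum_re_mul_le_distNorm {m : ℕ} (hm : 0 < m) {z : κ → ℝ}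
    (hz : ∀ i, |z i| ≤ 1 / √m) (hz2 : ∑ i, z i ^ 2 ≤ 1) (ψ : κ → ℂ) :
    √m * ∑ i, (ψ i).re * z i ≤ distNorm m ψ :=
  le_ciInf (sqrt_mul_sum_re_mul_le_distObjective hm hz hz2 ψ)

/-- By the intermediate value theorem: `∑ min(yᵢ, t)² - m t²` is `≥ 0` at the least positive
entry of `y` and `≤ 0` at `t = ∑ yᵢ`. -/
theorem exists_sum_min_sq_eq {y : κ → ℝ} (hy : ∀ i, 0 ≤ y i) {m : ℕ} (hm : 1 ≤ m)
    (hsupp : m < #{i | 0 < y i}) : ∃ t > 0, ∑ i, min (y i) t ^ 2 = m * t ^ 2 := by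
  set S : Finset κ := {i | 0 < y i}
  obtain ⟨i₀, hi₀, hmin⟩ := S.exists_min_image y (card_pos.1 (by omega))
  have hpos : 0 < y i₀ := (mem_filter.1 hi₀).2
  set T := ∑ i, y i
  have hle : y i₀ ≤ T := single_le_sum (fun i _ => hy i) (mem_univ i₀)
  have hlow : m * y i₀ ^ 2 ≤ ∑ i, min (y i) (y i₀) ^ 2 :=
    calc m * y i₀ ^ 2 ≤ #S * y i₀ ^ 2 := by gcongr
      _ = ∑ i ∈ S, min (y i) (y i₀) ^ 2 := by
          rw [← nsmul_eq_mul, ← sum_const]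
          exact sum_congr rfl fun i hi => by rw [min_eq_right (hmin i hi)]
      _ ≤ ∑ i, min (y i) (y i₀) ^ 2 :=
          sum_le_sum_of_subset_of_nonneg (subset_univ _) fun i _ _ => sq_nonneg _
  have hhigh : ∑ i, min (y i) T ^ 2 ≤ m * T ^ 2 :=
    calc ∑ i, min (y i) T ^ 2 ≤ ∑ i, y i * T := sum_le_sum fun i _ => by
          rw [sq]; exact mul_le_mul (min_le_left _ _) (min_le_right _ _)
            (le_min (hy i) (hpos.le.trans hle)) (hy i)
      _ = 1 * T ^ 2 := by rw [← sum_mul]; ring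
      _ ≤ m * T ^ 2 := by gcongr; exact_mod_cast hm
  have hcont : Continuous fun t => ∑ i, min (y i) t ^ 2 - m * t ^ 2 := by fun_prop
  obtain ⟨t, ht, hroot⟩ := intermediate_value_Icc' hle hcont.continuousOn
    ⟨sub_nonpos.2 hhigh, sub_nonneg.2 hlow⟩
  exact ⟨t, hpos.trans_le ht.1, sub_eq_zero.1 hroot⟩

theorem exists_dual_of_card_pos_le {y : κ → ℝ} (hy : ∀ i, 0 ≤ y i) {m : ℕ} (hm : 0 < m)
    (hsupp : #{i | 0 < y i} ≤ m) (hmκ : m ≤ Fintype.card κ) :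
    ∃ z : κ → ℝ, (∀ i, 0 ≤ z i) ∧ (∑ i, z i ^ 2 = 1) ∧ (∀ i, z i ≤ 1 / √m) ∧
      ∃ x : κ → ℂ, distObjective m (fun i => (y i : ℂ)) x ≤ √m * ∑ i, y i * z i := by
  classical
  obtain ⟨T, hST, hT⟩ := exists_superset_card_eq hsupp hmκ
  have hyT : ∀ i ∉ T, y i = 0 := fun i hi =>
    le_antisymm (not_lt.1 fun h => hi (hST (by simpa using h))) (hy i)
  have hs : 0 < √(m : ℝ) := by positivity
  refine ⟨fun i => if i ∈ T then 1 / √m else 0, fun i => by dsimp only; split_ifs <;> positivity,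
    ?_, fun i => ?_, fun i => ((0 : κ → ℝ) i : ℂ), ?_⟩
  · simp [apply_ite (· ^ 2), hT, hm.ne']
  · dsimp only; split_ifs
    exacts [le_rfl, by positivity]
  · rw [distObjective_ofReal]
    simp only [sub_zero, Pi.zero_apply, ne_eq, OfNat.ofNat_ne_zero, not_false_eq_true,
      zero_pow, sum_const_zero, Real.sqrt_zero, mul_zero, add_zero, mul_ite, mul_sum]
    rw [← sum_subset (subset_univ T) (f := fun i => |y i|) fun i _ hi => by simp [hyT i hi]]
    rw [← sum_filter, filter_mem_eq_inter, univ_inter]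
    refine (sum_congr rfl fun i _ => ?_).le
    rw [abs_of_nonneg (hy i)]
    field_simp

/-- Equality holds by complementary slackness: `(yᵢ - min(yᵢ, t)) (t - min(yᵢ, t)) = 0`. -/
theorem exists_dual_of_lt_card_pos {y : κ → ℝ} (hy : ∀ i, 0 ≤ y i) {m : ℕ} (hm : 1 ≤ m)
    (hsupp : m < #{i | 0 < y i}) :
    ∃ z : κ → ℝ, (∀ i, 0 ≤ z i) ∧ (∑ i, z i ^ 2 = 1) ∧ (∀ i, z i ≤ 1 / √m) ∧
      ∃ x : κ → ℂ, distObjective m (fun i => (y i : ℂ)) x ≤ √m * ∑ i, y i * z i := by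
  obtain ⟨t, ht, hsum⟩ := exists_sum_min_sq_eq hy hm hsupp
  set g : κ → ℝ := fun i => min (y i) t
  have hs : 0 < √(m : ℝ) := by positivity
  have hst : 0 < √m * t := by positivity
  have hgsq : ∑ i, g i ^ 2 = (√m * t) ^ 2 := by
    rw [hsum, mul_pow, Real.sq_sqrt (Nat.cast_nonneg m)]
  have hslack : ∀ i, (y i - g i) * t = y i * g i - g i ^ 2 := fun i => by
    rcases le_total (y i) t with h | h
    · simp only [g, min_eq_left h]; ring
    · simp only [g, min_eq_right h]; ring
  refine ⟨fun i => g i / (√m * t), fun i => div_nonneg (le_min (hy i) ht.le) hst.le, ?_,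
    fun i => ?_, fun i => (g i : ℂ), ?_⟩
  · simp only [div_pow, ← sum_div, hgsq]
    exact div_self (by positivity)
  · calc g i / (√m * t) ≤ t / (√m * t) := by gcongr; exact min_le_right _ _
      _ = 1 / √m := by field_simp
  · rw [distObjective_ofReal, hgsq, Real.sqrt_sq hst.le]
    have habs : ∀ i, |y i - g i| = y i - g i := fun i =>
      abs_of_nonneg (sub_nonneg.2 (min_le_left _ _))
    refine le_of_eq ?_
    calc ∑ i, |y i - g i| + √m * (√m * t)
        = (∑ i, (y i - g i) * t + (√m * t) ^ 2) / t := by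
          simp only [habs, ← sum_mul]; field_simp
      _ = (∑ i, (y i * g i - g i ^ 2) + ∑ i, g i ^ 2) / t := by
          rw [hgsq, sum_congr rfl fun i _ => hslack i]
      _ = √m * ∑ i, y i * (g i / (√m * t)) := by
          rw [← sum_add_distrib, mul_sum, sum_div]
          refine sum_congr rfl fun i _ => ?_
          field_simp
          ring

theorem exists_dual_attaining_distNorm {y : κ → ℝ} (hy : ∀ i, 0 ≤ y i) {m : ℕ} (hm : 1 ≤ m)
    (hmκ : m ≤ Fintype.card κ) :
    ∃ z : κ → ℝ, (∀ i, 0 ≤ z i) ∧ (∑ i, z i ^ 2 = 1) ∧ (∀ i, z i ≤ 1 / √m) ∧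
      ∃ x : κ → ℂ, distObjective m (fun i => (y i : ℂ)) x ≤ √m * ∑ i, y i * z i := by
  by_cases hsupp : #{i | 0 < y i} ≤ m
  · exact exists_dual_of_card_pos_le hy hm hsupp hmκ
  · exact exists_dual_of_lt_card_pos hy hm (not_le.1 hsupp)

end DistillationDuality

theorem stmt6_general {d : ℕ} (y : Fin d → ℝ) (hy : ∀ i, 0 ≤ y i)
    (m : ℕ) (hm : 1 ≤ m) (hmd : m ≤ d) :
    IsGreatest {r : ℝ | ∃ z : Fin d → ℝ, (∀ i, 0 ≤ z i) ∧ (∑ i, (z i)^2 = 1) ∧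
      (∀ i, z i ≤ 1 / Real.sqrt m) ∧ r = ∑ i, y i * z i}
      ((1 / Real.sqrt m) * distNorm m (fun i => (y i : ℂ))) := by
  have hs : 0 < √(m : ℝ) := by positivity
  have weak_duality : ∀ z : Fin d → ℝ, (∀ i, 0 ≤ z i) → ∑ i, z i ^ 2 = 1 →
      (∀ i, z i ≤ 1 / √m) → √m * ∑ i, y i * z i ≤ distNorm m (fun i => (y i : ℂ)) :=
    fun z hz0 hz2 hzb => by
      simpa using sqrt_mul_sum_re_mul_le_distNorm hm
        (fun i => (abs_of_nonneg (hz0 i)).trans_le (hzb i)) hz2.le (fun i => (y i : ℂ))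
  obtain ⟨z, hz0, hz2, hzb, x, hx⟩ :=
    exists_dual_attaining_distNorm hy hm (by rwa [Fintype.card_fin])
  refine ⟨⟨z, hz0, hz2, hzb, ?_⟩, ?_⟩
  · have hle := (distNorm_le_distObjective m _ x).trans hx
    have hge := weak_duality z hz0 hz2 hzb
    field_simp
    linarith
  · rintro _ ⟨w, hw0, hw2, hwb, rfl⟩
    rw [one_div_mul_eq_div, le_div_iff₀ hs, mul_comm]
    exact weak_duality w hw0 hw2 hwb

theorem stmt6 {d : ℕ} (y : Fin d → ℝ) (hy : ∀ i, 0 ≤ y i)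
    (hy2 : ∑ i, (y i)^2 = 1) (m : ℕ) (hm : 1 ≤ m) (hmd : m ≤ d) :
    IsGreatest {r : ℝ | ∃ z : Fin d → ℝ, (∀ i, 0 ≤ z i) ∧ (∑ i, (z i)^2 = 1) ∧
      (∀ i, z i ≤ 1 / Real.sqrt m) ∧ r = ∑ i, y i * z i}
      ((1 / Real.sqrt m) * distNorm m (fun i => (y i : ℂ))) :=
  stmt6_general y hy m hm hmd

end
end

section
/- For any d ≥ 4 there exists a density matrix ω with all diagonal entries equal to 1/d which cannot be written as any convex combination of pure states |φ⟩⟨φ| with ‖φ‖_∞² ≤ 1/d; i.e., M_d ⊊ N_d for d ≥ 4. -/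
/-!
The witness is `d⁻¹ (|a⟩⟨a| + |b⟩⟨b| + ∑_{i ≥ 4} |eᵢ⟩⟨eᵢ|)` with `a = (1, 0, 3/5, 3/5)` and
`b = (0, 1, 4/5, 4i/5)`; since `(3/5)² + (4/5)² = 1` its diagonal is constant. Its kernel
contains `w₁ = (3/5, 4/5, -1, 0)` and `w₂ = (3/5, -4i/5, 0, -1)`, and every pure state occurring
with positive weight in a decomposition is orthogonal to the kernel. A unit vector with
`‖φ‖_∞ ≤ 1/√d` is flat, `|φⱼ|² = 1/d`, and orthogonality to `w₁, w₂` gives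
`φ̄₂ = 3/5 φ̄₀ + 4/5 φ̄₁` and `φ̄₃ = 3/5 φ̄₀ - 4i/5 φ̄₁`. Equating moduli kills the real,
respectively imaginary, part of `φ̄₀ φ₁`, contradicting `|φ₀ φ₁| = 1/d`.
-/

open Matrix BigOperators Complex ComplexOrder

open Matrix Complex ComplexConjugate Finset

section PureStates

variable {ι κ : Type*} [Fintype κ]

lemma pureState_eq_vecMulVec (ψ : ι → ℂ) : pureState ψ = vecMulVec ψ (star ψ) := rfl

lemma pureState_apply_self (ψ : ι → ℂ) (i : ι) : pureState ψ i i = (‖ψ i‖ : ℂ) ^ 2 :=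
  mul_conj' (ψ i)

lemma sum_smul_pureState_apply_self (p : κ → ℝ) (ψ : κ → ι → ℂ) (i : ι) :
    (∑ k, p k • pureState (ψ k)) i i = ((∑ k, p k * ‖ψ k i‖ ^ 2 : ℝ) : ℂ) := by
  simp [Matrix.sum_apply, pureState_apply_self, Complex.real_smul]

variable [Fintype ι]

lemma dotProduct_pureState_mulVec (ψ w : ι → ℂ) :
    star w ⬝ᵥ (pureState ψ *ᵥ w) = normSq (star ψ ⬝ᵥ w) := by
  rw [pureState_eq_vecMulVec, vecMulVec_mulVec, dotProduct_smul, op_smul_eq_mul,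
    star_dotProduct (v := w), normSq_eq_conj_mul_self]
  rfl

lemma posSemidef_sum_smul_pureState {p : κ → ℝ} (hp : ∀ k, 0 ≤ p k) (ψ : κ → ι → ℂ) :
    (∑ k, p k • pureState (ψ k)).PosSemidef :=
  posSemidef_sum _ fun k _ => (posSemidef_vecMulVec_self_star (ψ k)).smul (hp k)

lemma dotProduct_eq_zero_of_sum_smul_pureState {p : κ → ℝ} (hp : ∀ k, 0 ≤ p k)
    (ψ : κ → ι → ℂ) {w : ι → ℂ} (hw : star w ⬝ᵥ ((∑ k, p k • pureState (ψ k)) *ᵥ w) = 0)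
    {k : κ} (hk : p k ≠ 0) : star (ψ k) ⬝ᵥ w = 0 := by
  have hsum : ∑ k, p k * normSq (star (ψ k) ⬝ᵥ w) = 0 := by
    rw [sum_mulVec, dotProduct_sum] at hw
    simp only [smul_mulVec, dotProduct_smul, dotProduct_pureState_mulVec, Complex.real_smul]
      at hw
    exact_mod_cast hw
  have hterm := (sum_eq_zero_iff_of_nonneg fun k _ => mul_nonneg (hp k) (normSq_nonneg _)).mp
    hsum k (mem_univ k)
  exact normSq_eq_zero.mp ((mul_eq_zero.mp hterm).resolve_left hk)

end PureStates

lemma sq_le_one_div_of_le_one_div_sqrt {a m : ℝ} (hm : 0 ≤ m) (ha : 0 ≤ a)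
    (h : a ≤ 1 / √m) : a ^ 2 ≤ 1 / m := by
  calc a ^ 2 ≤ (1 / √m) ^ 2 := pow_le_pow_left₀ ha h 2
    _ = 1 / m := by rw [div_pow, one_pow, Real.sq_sqrt hm]

lemma eq_of_sum_eq_card_mul_of_le {ι : Type*} [Fintype ι] {f : ι → ℝ} {c : ℝ}
    (hle : ∀ i, f i ≤ c) (hsum : ∑ i, f i = Fintype.card ι * c) (i : ι) : f i = c := by
  rw [← nsmul_eq_mul, ← card_univ, ← sum_const] at hsum
  exact (sum_eq_sum_iff_of_le fun i _ => hle i).mp hsum i (mem_univ i)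

lemma sq_norm_eq_of_sum_sq_norm_eq_one {ι : Type*} [Fintype ι] {v : ι → ℂ}
    (hv : ∑ j, ‖v j‖ ^ 2 = 1) (hle : ∀ j, ‖v j‖ ≤ 1 / √(Fintype.card ι)) (j : ι) :
    ‖v j‖ ^ 2 = 1 / Fintype.card ι := by
  have hcard : (Fintype.card ι : ℝ) ≠ 0 := by
    have := (nonempty_of_sum_ne_zero (hv.trans_ne one_ne_zero)).card_pos
    rw [card_univ] at this
    positivity
  refine eq_of_sum_eq_card_mul_of_le (f := fun j => ‖v j‖ ^ 2) (fun j => ?_) ?_ j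
  · exact sq_le_one_div_of_le_one_div_sqrt (Nat.cast_nonneg _) (norm_nonneg _) (hle j)
  · rw [hv, mul_one_div_cancel hcard]

section Mset

variable {ι : Type*} [Fintype ι]

theorem Mset_subset_Nset (m : ℕ) : Mset (ι := ι) m ⊆ Nset m := by
  rintro _ ⟨n, p, ψ, hp, hp1, hunit, hle, rfl⟩
  refine ⟨⟨posSemidef_sum_smul_pureState hp ψ, ?_⟩, fun i => ?_⟩
  · rw [trace, ← ofReal_one, ← hp1]
    simp only [diag_apply, sum_smul_pureState_apply_self, ← ofReal_sum, ofReal_inj]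
    rw [sum_comm]
    simp [← mul_sum, hunit]
  · rw [sum_smul_pureState_apply_self, ofReal_re]
    calc ∑ k, p k * ‖ψ k i‖ ^ 2 ≤ ∑ k, p k * (1 / m) := by
          gcongr with k
          · exact hp k
          · exact sq_le_one_div_of_le_one_div_sqrt (Nat.cast_nonneg _) (norm_nonneg _) (hle k i)
      _ = 1 / m := by rw [← sum_mul, hp1, one_mul]

end Mset

lemma Fin.sum_univ_eq_sum_castLE {M : Type*} [AddCommMonoid M] {m d : ℕ} (h : m ≤ d)
    {f : Fin d → M} (hf : ∀ i : Fin d, m ≤ (i : ℕ) → f i = 0) :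
    ∑ i, f i = ∑ i : Fin m, f (Fin.castLE h i) := by
  calc ∑ i, f i = ∑ i ∈ univ.map (Fin.castLEEmb h), f i := by
        refine (sum_subset (subset_univ _) fun i _ hi => hf i ?_).symm
        by_contra hlt
        exact hi (mem_map.mpr ⟨⟨i, by omega⟩, mem_univ _, rfl⟩)
    _ = ∑ i : Fin m, f (Fin.castLE h i) := sum_map _ _ _

namespace CorrelationWitness

lemma normSq_eq_zero_of_normSq_combinations_eq {x y : ℂ} {c : ℝ}
    (hx : normSq x = c) (hy : normSq y = c) (h₁ : normSq (3 / 5 * x + 4 / 5 * y) = c)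
    (h₂ : normSq (3 / 5 * x - 4 / 5 * I * y) = c) : c = 0 := by
  simp only [normSq_apply] at *
  have hre : x.re * y.re + x.im * y.im = 0 := by
    norm_num at h₁
    linear_combination (25 / 24) * (h₁ - 9 / 25 * hx - 16 / 25 * hy)
  have him : x.re * y.im - x.im * y.re = 0 := by
    norm_num at h₂
    linear_combination (25 / 24) * (h₂ - 9 / 25 * hx - 16 / 25 * hy)
  refine mul_self_eq_zero.mp ?_
  calc c * c = (x.re * x.re + x.im * x.im) * (y.re * y.re + y.im * y.im) := by rw [hx, hy]
    _ = (x.re * y.re + x.im * y.im) ^ 2 + (x.re * y.im - x.im * y.re) ^ 2 := by ring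
    _ = 0 := by rw [hre, him]; ring

noncomputable def a : ℕ → ℂ
  | 0 => 1
  | 2 => 3 / 5
  | 3 => 3 / 5
  | _ => 0

noncomputable def b : ℕ → ℂ
  | 1 => 1
  | 2 => 4 / 5
  | 3 => 4 / 5 * I
  | _ => 0

noncomputable def kerVec₁ : ℕ → ℂ
  | 0 => 3 / 5
  | 1 => 4 / 5
  | 2 => -1
  | _ => 0

noncomputable def kerVec₂ : ℕ → ℂ
  | 0 => 3 / 5
  | 1 => -(4 / 5 * I)
  | 3 => -1
  | _ => 0

noncomputable def witness (d : ℕ) : Matrix (Fin d) (Fin d) ℂ :=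
  (d : ℝ)⁻¹ • (pureState (fun i : Fin d => a i) + pureState (fun i : Fin d => b i) +
    diagonal fun i : Fin d => if 4 ≤ (i : ℕ) then 1 else 0)

lemma witness_apply_self (d : ℕ) (i : Fin d) : witness d i i = (d : ℂ)⁻¹ := by
  have hdiag : ∀ n : ℕ, (‖a n‖ : ℂ) ^ 2 + (‖b n‖ : ℂ) ^ 2 + (if 4 ≤ n then 1 else 0) = 1
    | 0 | 1 | 2 | 3 => by norm_num [a, b]
    | _ + 4 => by simp [a, b]
  simp [witness, pureState_apply_self, hdiag, Complex.real_smul]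

lemma kerVec₁_eq_zero : ∀ n, 4 ≤ n → kerVec₁ n = 0
  | _ + 4, _ => rfl

lemma kerVec₂_eq_zero : ∀ n, 4 ≤ n → kerVec₂ n = 0
  | _ + 4, _ => rfl

lemma witness_posSemidef (d : ℕ) : (witness d).PosSemidef := by
  refine (((posSemidef_vecMulVec_self_star _).add (posSemidef_vecMulVec_self_star _)).add
    (PosSemidef.diagonal fun i => ?_)).smul (by positivity)
  split_ifs <;> norm_num

lemma isDensityMatrix_witness {d : ℕ} (hd : d ≠ 0) : IsDensityMatrix (witness d) := by
  refine ⟨witness_posSemidef d, ?_⟩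
  simp [trace, witness_apply_self, hd]

lemma dotProduct_eq_sum_fin_four {d : ℕ} (hd : 4 ≤ d) (u : Fin d → ℂ) {w : ℕ → ℂ}
    (hw : ∀ n, 4 ≤ n → w n = 0) :
    u ⬝ᵥ (fun i => w i) = ∑ i : Fin 4, u (Fin.castLE hd i) * w i :=
  Fin.sum_univ_eq_sum_castLE hd fun i hi => by simp [hw i hi]

lemma witness_mulVec_eq_zero {d : ℕ} {w : ℕ → ℂ} (hw : ∀ n, 4 ≤ n → w n = 0)
    (ha : star (fun i : Fin d => a i) ⬝ᵥ (fun i => w i) = 0)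
    (hb : star (fun i : Fin d => b i) ⬝ᵥ (fun i => w i) = 0) :
    witness d *ᵥ (fun i => w i) = 0 := by
  have htail : (diagonal fun i : Fin d => if 4 ≤ (i : ℕ) then (1 : ℂ) else 0) *ᵥ
      (fun i => w i) = 0 := by
    ext i
    by_cases hi : 4 ≤ (i : ℕ) <;> simp [mulVec_diagonal, hi, hw]
  simp only [witness, smul_mulVec, add_mulVec, pureState_eq_vecMulVec, vecMulVec_mulVec, ha, hb,
    htail, MulOpposite.op_zero, zero_smul, add_zero, smul_zero]

lemma witness_mulVec_kerVec₁ {d : ℕ} (hd : 4 ≤ d) : witness d *ᵥ (fun i => kerVec₁ i) = 0 := by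
  apply witness_mulVec_eq_zero kerVec₁_eq_zero <;>
    rw [dotProduct_eq_sum_fin_four hd _ kerVec₁_eq_zero] <;>
    simp [Fin.sum_univ_four, a, b, kerVec₁, map_ofNat]

lemma witness_mulVec_kerVec₂ {d : ℕ} (hd : 4 ≤ d) : witness d *ᵥ (fun i => kerVec₂ i) = 0 := by
  apply witness_mulVec_eq_zero kerVec₂_eq_zero <;>
    rw [dotProduct_eq_sum_fin_four hd _ kerVec₂_eq_zero] <;>
    simp [Fin.sum_univ_four, a, b, kerVec₂, map_ofNat]

theorem witness_notMem_Mset {d : ℕ} (hd : 4 ≤ d) : witness d ∉ Mset (ι := Fin d) d := by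
  rintro ⟨n, p, ψ, hp, hp1, hunit, hle, hW⟩
  obtain ⟨k, hk⟩ : ∃ k, p k ≠ 0 := by
    by_contra! h
    simp [h] at hp1
  have horth : ∀ w : ℕ → ℂ, witness d *ᵥ (fun i => w i) = 0 →
      star (ψ k) ⬝ᵥ (fun i => w i) = 0 := fun w hw =>
    dotProduct_eq_zero_of_sum_smul_pureState hp ψ (by rw [← hW, hw, dotProduct_zero]) hk
  have h₁ := horth _ (witness_mulVec_kerVec₁ hd)
  have h₂ := horth _ (witness_mulVec_kerVec₂ hd)
  rw [dotProduct_eq_sum_fin_four hd _ kerVec₁_eq_zero] at h₁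
  rw [dotProduct_eq_sum_fin_four hd _ kerVec₂_eq_zero] at h₂
  simp only [Fin.sum_univ_four, Pi.star_apply, RCLike.star_def, kerVec₁, kerVec₂, Fin.isValue,
    Fin.coe_ofNat_eq_mod, Nat.zero_mod, Nat.one_mod, Nat.reduceMod, Nat.mod_succ, mul_neg, mul_one,
    mul_zero, add_zero] at h₁ h₂
  have hflat : ∀ j, normSq (conj (ψ k j)) = 1 / d := fun j => by
    rw [normSq_conj, normSq_eq_norm_sq]
    simpa using sq_norm_eq_of_sum_sq_norm_eq_one (hunit k) (by simpa using hle k) j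
  refine (by positivity : (1 / d : ℝ) ≠ 0) <|
    normSq_eq_zero_of_normSq_combinations_eq (hflat (Fin.castLE hd 0)) (hflat (Fin.castLE hd 1))
      (by rw [← hflat (Fin.castLE hd 2)]; congr 1; linear_combination h₁)
      (by rw [← hflat (Fin.castLE hd 3)]; congr 1; linear_combination h₂)

end CorrelationWitness

open CorrelationWitness in
theorem stmt10 (d : ℕ) (hd : 4 ≤ d) :
    (∃ ω : Matrix (Fin d) (Fin d) ℂ, IsDensityMatrix ω ∧ (∀ i, ω i i = (d : ℂ)⁻¹) ∧
      ω ∉ Mset (ι := Fin d) d) ∧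
    Mset (ι := Fin d) d ⊂ Nset d := by
  have hd₀ : d ≠ 0 := by omega
  refine ⟨⟨witness d, isDensityMatrix_witness hd₀, witness_apply_self d, witness_notMem_Mset hd⟩,
    (Set.ssubset_iff_of_subset (Mset_subset_Nset d)).mpr ⟨witness d, ?_, witness_notMem_Mset hd⟩⟩
  exact ⟨isDensityMatrix_witness hd₀, fun i => by simp [witness_apply_self]⟩
end
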